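/- Let q be a homogeneous polynomial of degree 2 in the variables x₁,…,x₅ whose polar form is nondegenerate, written as q = x₁·h₁ + q₁ with h₁ a linear form and q₁ a quadratic form in the variables x₂,…,x₅ only. Then h₁ ≠ 0 and the restriction of q₁ to the 3-dimensional hyperplane ker h₁ ⊆ ℂ⁴ is a nondegenerate quadratic form (i.e., q₁ restricted to ker h₁ has rank three). This is the computation showing that the Fano variety of a nodal cubic fourfold has transversal A₁-singularities along Σ. -/

import Mathlib

/-!
Write `H` for `h₁` and `B`, `B₁` for the polar forms of `q`, `q₁`. Since `q = x₁ H + q₁`,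
`B(z, u) = ½ (z₁ H(u) + u₁ H(z)) + B₁(z, u)`, and `B₁` does not see the first coordinate.
If `H = 0`, the first basis vector `e₁` lies in the radical of `B`. Otherwise let `v` lie in
`{x₁ = 0} ∩ ker H` and be `B₁`-orthogonal to it; then the linear form `B₁(v, ·)` vanishes on
all of `ker H`, so `B₁(v, ·) = a H` for some `a`, and `v - a e₁` lies in the radical of `B`.
Hence `v = a e₁`, and `v₁ = 0` forces `v = 0`.
-/

open MvPolynomial
open QuadraticMap (polar polar_comm)

namespace Finsupp

variable {σ : Type*}

theorem card_toMultiset_eq_degree (m : σ →₀ ℕ) : Multiset.card (toMultiset m) = m.degree := by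
  simp [degree_apply, Finsupp.sum]

theorem exists_eq_single_of_degree_eq_one {m : σ →₀ ℕ} (h : m.degree = 1) :
    ∃ i, m = single i 1 := by
  classical
  obtain ⟨i, hi⟩ := Multiset.card_eq_one.1 (h ▸ card_toMultiset_eq_degree m)
  exact ⟨i, by rw [← Multiset.toFinsupp_singleton, ← toMultiset_eq_iff, hi]⟩

theorem exists_eq_single_add_single_of_degree_eq_two {m : σ →₀ ℕ} (h : m.degree = 2) :
    ∃ i j, m = single i 1 + single j 1 := by
  classical
  obtain ⟨i, j, hij⟩ := Multiset.card_eq_two.1 (h ▸ card_toMultiset_eq_degree m)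
  refine ⟨i, j, ?_⟩
  rw [← Multiset.toFinsupp_singleton, ← Multiset.toFinsupp_singleton, ← Multiset.toFinsupp_add,
    ← toMultiset_eq_iff, hij, Multiset.insert_eq_cons, Multiset.singleton_add]

end Finsupp

theorem LinearMap.exists_eq_smul_of_ker_le {𝕜 E : Type*} [Field 𝕜] [AddCommGroup E] [Module 𝕜 E]
    {f g : E →ₗ[𝕜] 𝕜} (h : ker f ≤ ker g) : ∃ a : 𝕜, g = a • f := by
  have hg := mem_span_of_iInf_ker_le_ker (L := fun _ : Unit => f) (by simpa using h)
  rw [Set.range_const, Submodule.mem_span_singleton] at hg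
  obtain ⟨a, rfl⟩ := hg
  exact ⟨a, rfl⟩

namespace MvPolynomial

variable {σ R : Type*}

theorem eval_eq_of_forall_ne [CommSemiring R] {p : MvPolynomial σ R} {i : σ}
    (hp : ∀ m ∈ p.support, m i = 0) {x y : σ → R} (hxy : ∀ j, j ≠ i → x j = y j) :
    eval x p = eval y p :=
  eval₂_congr (p := p) _ x y fun {j} {m} hj hm => hxy j <| by
    rintro rfl
    exact Finsupp.mem_support_iff.1 hj (hp m (mem_support_iff.2 hm))

variable [CommRing R] {p : MvPolynomial σ R}

theorem polar_eval_eq_of_forall_ne {i : σ} (hp : ∀ m ∈ p.support, m i = 0) {v v' u u' : σ → R}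
    (hv : ∀ j, j ≠ i → v j = v' j) (hu : ∀ j, j ≠ i → u j = u' j) :
    polar (eval · p) v u = polar (eval · p) v' u' := by
  simp only [polar, eval_eq_of_forall_ne hp hv, eval_eq_of_forall_ne hp hu,
    eval_eq_of_forall_ne hp (x := v + u) (y := v' + u') fun j hj => by simp [hv j hj, hu j hj]]

theorem IsHomogeneous.isLinearMap_eval (hp : p.IsHomogeneous 1) :
    IsLinearMap R fun x : σ → R => eval x p := by
  have h (a b : R) (v u : σ → R) : eval (a • v + b • u) p = a * eval v p + b * eval u p := by
    simp only [eval_eq, Finset.mul_sum, ← Finset.sum_add_distrib]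
    refine Finset.sum_congr rfl fun m hm => ?_
    obtain ⟨i, rfl⟩ := Finsupp.exists_eq_single_of_degree_eq_one
      (hp.degree_eq_sum_deg_support hm).symm
    simp only [ne_eq, one_ne_zero, not_false_eq_true, Finsupp.support_single, Pi.add_apply,
      Pi.smul_apply, smul_eq_mul, Finset.prod_singleton, Finsupp.single_eq_same, pow_one]
    ring
  exact ⟨fun v u => by simpa using h 1 1 v u, fun c v => by simpa using h c 0 v v⟩

theorem IsHomogeneous.isLinearMap_polar_eval (hp : p.IsHomogeneous 2) (v : σ → R) :
    IsLinearMap R (polar (eval · p) v) := by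
  have eval_as_sum (x : σ → R) :
      eval x p = ∑ m ∈ p.support, eval x (monomial m (coeff m p)) := by
    conv_lhs => rw [p.as_sum, map_sum]
  have h (a b : R) (u w : σ → R) :
      polar (eval · p) v (a • u + b • w) = a * polar (eval · p) v u + b * polar (eval · p) v w := by
    simp only [polar, eval_as_sum, Finset.mul_sum, ← Finset.sum_add_distrib,
      ← Finset.sum_sub_distrib]
    refine Finset.sum_congr rfl fun m hm => ?_
    obtain ⟨i, j, rfl⟩ := Finsupp.exists_eq_single_add_single_of_degree_eq_two
      (hp.degree_eq_sum_deg_support hm).symm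
    simp only [eval_monomial, Finsupp.prod_add_index' (fun _ => pow_zero _)
      (fun _ _ _ => pow_add _ _ _), Finsupp.prod_single_index, pow_zero, pow_one, Pi.add_apply,
      Pi.smul_apply, smul_eq_mul]
    ring
  exact ⟨fun u w => by simpa using h 1 1 u w, fun c u => by simpa using h c 0 u u⟩

end MvPolynomial

theorem stmt_6_general (q h₁ q₁ : MvPolynomial (Fin 5) ℂ)
    (hqnd : ∀ v : Fin 5 → ℂ,
      (∀ u : Fin 5 → ℂ, (eval (v + u) q - eval v q - eval u q) / 2 = 0) → v = 0)
    (hh₁ : h₁.IsHomogeneous 1) (hq₁ : q₁.IsHomogeneous 2)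
    (hh₁0 : ∀ m ∈ h₁.support, m 0 = 0) (hq₁0 : ∀ m ∈ q₁.support, m 0 = 0)
    (hdec : q = X 0 * h₁ + q₁) :
    h₁ ≠ 0 ∧
    ∀ v : Fin 5 → ℂ, v 0 = 0 → eval v h₁ = 0 →
      (∀ u : Fin 5 → ℂ, u 0 = 0 → eval u h₁ = 0 →
        (eval (v + u) q₁ - eval v q₁ - eval u q₁) / 2 = 0) →
      v = 0 := by
  have radical (z : Fin 5 → ℂ) (hz : ∀ u, polar (eval · q) z u = 0) : z = 0 :=
    hqnd z fun u => by rw [show eval (z + u) q - eval z q - eval u q = 0 from hz u, zero_div]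
  have polar_q (z u : Fin 5 → ℂ) : polar (eval · q) z u =
      z 0 * eval u h₁ + u 0 * eval z h₁ + polar (eval · q₁) z u := by
    simp only [polar, hdec, map_add, map_mul, eval_X, hh₁.isLinearMap_eval.map_add, Pi.add_apply]
    ring
  refine ⟨?_, fun v hv0 hvh hv => ?_⟩
  · rintro rfl
    have := radical (Pi.single 0 1) fun u => by
      rw [polar_q, polar_eval_eq_of_forall_ne hq₁0 (v' := 0) (u' := u)
          (fun j hj => Pi.single_eq_of_ne hj 1) fun _ _ => rfl,
        polar_comm, (hq₁.isLinearMap_polar_eval u).map_zero]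
      simp
    simpa using congrFun this 0
  let H := IsLinearMap.mk' _ hh₁.isLinearMap_eval
  let L := IsLinearMap.mk' _ (hq₁.isLinearMap_polar_eval v)
  have hker : LinearMap.ker H ≤ LinearMap.ker L := by
    intro u hu
    have hu' : eval (Function.update u 0 0) h₁ = 0 :=
      (eval_eq_of_forall_ne hh₁0 fun j hj => Function.update_of_ne hj 0 u).trans hu
    rw [LinearMap.mem_ker, IsLinearMap.mk'_apply, polar_eval_eq_of_forall_ne hq₁0
      (fun _ _ => rfl) fun j hj => (Function.update_of_ne hj 0 u).symm]
    exact (div_eq_zero_iff.1 (hv _ (by simp) hu')).resolve_right two_ne_zero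
  obtain ⟨a, ha⟩ := LinearMap.exists_eq_smul_of_ker_le hker
  have hz := radical (Function.update v 0 (-a)) fun u => by
    have hLu := LinearMap.congr_fun ha u
    rw [polar_q, polar_eval_eq_of_forall_ne hq₁0 (v' := v) (u' := u)
      (fun j hj => Function.update_of_ne hj _ v) fun _ _ => rfl,
      eval_eq_of_forall_ne hh₁0 (y := v) (fun j hj => Function.update_of_ne hj _ v), hvh]
    simp only [IsLinearMap.mk'_apply, LinearMap.smul_apply, smul_eq_mul, H, L] at hLu
    simp only [Function.update_self, hLu]
    ring
  funext j
  rcases eq_or_ne j 0 with rfl | hj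
  · exact hv0
  · simpa [Function.update_of_ne hj] using congrFun hz j

/-- for a nondegenerate quadratic form `q = x₁·h₁ + q₁` in `x₁, …, x₅`
(`h₁` linear and `q₁` quadratic in `x₂, …, x₅` only, the coordinates of `ℂ⁴` being
identified with the hyperplane `{x₁ = 0}` of `ℂ⁵`), one has `h₁ ≠ 0` and the
restriction of `q₁` to the hyperplane `ker h₁ ⊆ ℂ⁴` is a nondegenerate quadratic
form (rank three). -/
theorem stmt_6 (q h₁ q₁ : MvPolynomial (Fin 5) ℂ)
    (hq : q.IsHomogeneous 2)
    (hqnd : ∀ v : Fin 5 → ℂ,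
      (∀ u : Fin 5 → ℂ, (eval (v + u) q - eval v q - eval u q) / 2 = 0) → v = 0)
    (hh₁ : h₁.IsHomogeneous 1) (hq₁ : q₁.IsHomogeneous 2)
    (hh₁0 : ∀ m ∈ h₁.support, m 0 = 0) (hq₁0 : ∀ m ∈ q₁.support, m 0 = 0)
    (hdec : q = X 0 * h₁ + q₁) :
    h₁ ≠ 0 ∧
    ∀ v : Fin 5 → ℂ, v 0 = 0 → eval v h₁ = 0 →
      (∀ u : Fin 5 → ℂ, u 0 = 0 → eval u h₁ = 0 →
        (eval (v + u) q₁ - eval v q₁ - eval u q₁) / 2 = 0) →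
      v = 0 :=
  stmt_6_general q h₁ q₁ hqnd hh₁ hq₁ hh₁0 hq₁0 hdec
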